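/- arXiv:1303.6837 — 4 statements merged into one kernel-verified Lean document; each statement's English description precedes it below -/
import Mathlib

section
/- Let T ∈ ℝ^{n×n} be symmetric and Z ∈ ℝ^{n×n} be such that the 2n×2n block matrix W := [[T, Z],[Zᵀ, T]] is positive semidefinite. Let h < h' be reals, δ := h' − h, τ ∈ [h, h'], t ∈ ℝ, and let ξ : [t−h', t−h] → ℝⁿ be C¹. Then δ ∫_{t−h'}^{t−h} ξ'(s)ᵀ T ξ'(s) ds ≥ [a; b]ᵀ W [a; b], where a := ξ(t−h) − ξ(t−τ) and b := ξ(t−τ) − ξ(t−h'). -/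
/-!
Write `a = ∫_{t-τ}^{t-h} ξ'` and `b = ∫_{t-h'}^{t-τ} ξ'`, integrals over intervals of lengths
`p` and `q` with `p + q = δ`. Jensen's inequality bounds `aᵀTa` by `p` times the integral of
`ξ'ᵀTξ'` over the first interval, and `bᵀTb` by `q` times the integral over the second.
Positive semidefiniteness of `W` at `(q a, -p b)` gives `2 pq aᵀZb ≤ q² aᵀTa + p² bᵀTb`, that is
`[a; b]ᵀW[a; b] ≤ (p + q) (aᵀTa / p + bᵀTb / q)` (reciprocal convexity), and the two Jensen
bounds add up to the claim. When `τ` is an endpoint, one of `a`, `b` is zero and Jensen suffices.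
-/

open Matrix Set

theorem intervalIntegral.integral_eq_sub_of_hasDerivWithinAt_Icc {E : Type*}
    [NormedAddCommGroup E] [NormedSpace ℝ E] [CompleteSpace E] {f f' : ℝ → E} {a b c d : ℝ}
    (hf : ∀ x ∈ Icc a b, HasDerivWithinAt f (f' x) (Icc a b) x)
    (hf' : ContinuousOn f' (Icc a b)) (hcd : c ≤ d) (hac : a ≤ c) (hdb : d ≤ b) :
    ∫ x in c..d, f' x = f d - f c := by
  have hsub : Icc c d ⊆ Icc a b := Icc_subset_Icc hac hdb
  exact integral_eq_sub_of_hasDerivAt_of_le hcd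
    (fun x hx => ((hf x (hsub hx)).continuousWithinAt).mono hsub)
    (fun x hx => (hf x (hsub (Ioo_subset_Icc_self hx))).hasDerivAt
      (Icc_mem_nhds (hac.trans_lt hx.1) (hx.2.trans_le hdb)))
    ((hf'.mono hsub).intervalIntegrable_of_Icc hcd)

section QuadraticForm

variable {m : Type*} [Fintype m]

theorem Matrix.PosSemidef.dotProduct_mulVec_comm {T : Matrix m m ℝ} (hT : T.PosSemidef)
    (x y : m → ℝ) : x ⬝ᵥ (T *ᵥ y) = y ⬝ᵥ (T *ᵥ x) := by
  rw [dotProduct_mulVec, ← mulVec_transpose, ← conjTranspose_eq_transpose_of_trivial, hT.1.eq,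
    dotProduct_comm]

theorem Matrix.PosSemidef.dotProduct_mulVec_self_nonneg {T : Matrix m m ℝ} (hT : T.PosSemidef)
    (x : m → ℝ) : 0 ≤ x ⬝ᵥ (T *ᵥ x) := by
  simpa using hT.dotProduct_mulVec_nonneg x

theorem sumElim_dotProduct_fromBlocks_mulVec_sumElim (A B C D : Matrix m m ℝ) (a b : m → ℝ) :
    Sum.elim a b ⬝ᵥ (fromBlocks A B C D *ᵥ Sum.elim a b) =
      a ⬝ᵥ (A *ᵥ a) + a ⬝ᵥ (B *ᵥ b) + (b ⬝ᵥ (C *ᵥ a) + b ⬝ᵥ (D *ᵥ b)) := by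
  simp only [fromBlocks_mulVec, sumElim_dotProduct_sumElim, dotProduct_add, Sum.elim_comp_inl,
    Sum.elim_comp_inr]

theorem Matrix.PosSemidef.sumElim_dotProduct_fromBlocks_mulVec_le {T Z : Matrix m m ℝ}
    (hW : (fromBlocks T Z Zᵀ T).PosSemidef) (a b : m → ℝ) {p q : ℝ} (hp : 0 < p) (hq : 0 < q) :
    Sum.elim a b ⬝ᵥ (fromBlocks T Z Zᵀ T *ᵥ Sum.elim a b) ≤
      (p + q) * (a ⬝ᵥ (T *ᵥ a) / p + b ⬝ᵥ (T *ᵥ b) / q) := by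
  have hZ : ∀ x y : m → ℝ, y ⬝ᵥ (Zᵀ *ᵥ x) = x ⬝ᵥ (Z *ᵥ y) := fun x y => by
    rw [dotProduct_mulVec, vecMul_transpose, dotProduct_comm]
  have hcross : 2 * (p * q) * (a ⬝ᵥ (Z *ᵥ b)) ≤
      q ^ 2 * (a ⬝ᵥ (T *ᵥ a)) + p ^ 2 * (b ⬝ᵥ (T *ᵥ b)) := by
    have h := hW.dotProduct_mulVec_nonneg (Sum.elim (q • a) (-(p • b)))
    simp only [star_trivial, sumElim_dotProduct_fromBlocks_mulVec_sumElim, hZ, mulVec_neg,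
      mulVec_smul, dotProduct_neg, neg_dotProduct, dotProduct_smul, smul_dotProduct,
      smul_eq_mul] at h
    nlinarith
  rw [sumElim_dotProduct_fromBlocks_mulVec_sumElim, hZ, div_add_div _ _ hp.ne' hq.ne',
    mul_div_assoc', le_div_iff₀ (mul_pos hp hq)]
  nlinarith

open MeasureTheory intervalIntegral in
theorem Matrix.PosSemidef.intervalIntegral_dotProduct_mulVec_le {T : Matrix m m ℝ}
    (hT : T.PosSemidef) {g : ℝ → m → ℝ} {u v : ℝ} (huv : u ≤ v)
    (hg : ContinuousOn g (Icc u v)) :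
    (∫ s in u..v, g s) ⬝ᵥ (T *ᵥ ∫ s in u..v, g s) ≤
      (v - u) * ∫ s in u..v, g s ⬝ᵥ (T *ᵥ g s) := by
  rcases huv.eq_or_lt with rfl | hlt
  · simp
  set c := ∫ s in u..v, g s
  have hg_int : IntervalIntegrable g volume u v := hg.intervalIntegrable_of_Icc huv
  have hquad_int : IntervalIntegrable (fun s => g s ⬝ᵥ (T *ᵥ g s)) volume u v :=
    ((continuous_id.dotProduct (continuous_const.matrix_mulVec continuous_id)).comp_continuousOn
      hg).intervalIntegrable_of_Icc huv
  have hlin_int : IntervalIntegrable (fun s => (T *ᵥ c) ⬝ᵥ g s) volume u v :=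
    ((continuous_const.dotProduct continuous_id).comp_continuousOn hg).intervalIntegrable_of_Icc
      huv
  have hlin : ∫ s in u..v, (T *ᵥ c) ⬝ᵥ g s = c ⬝ᵥ (T *ᵥ c) := by
    rw [dotProduct_comm c]
    exact ((dotProductBilin ℝ ℝ (T *ᵥ c)).toContinuousLinearMap.intervalIntegral_comp_comm hg_int)
  -- integrate `0 ≤ wᵀTw` with `w = (v - u) g s - c` over `[u, v]`
  have hpt : ∀ s, 2 * (v - u) * ((T *ᵥ c) ⬝ᵥ g s) - c ⬝ᵥ (T *ᵥ c) ≤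
      (v - u) ^ 2 * (g s ⬝ᵥ (T *ᵥ g s)) := fun s => by
    have h := hT.dotProduct_mulVec_self_nonneg ((v - u) • g s - c)
    simp only [mulVec_sub, mulVec_smul, dotProduct_sub, sub_dotProduct, dotProduct_smul,
      smul_dotProduct, smul_eq_mul, hT.dotProduct_mulVec_comm c (g s),
      dotProduct_comm (T *ᵥ c)] at h ⊢
    nlinarith
  have h := integral_mono_on huv ((hlin_int.const_mul _).sub intervalIntegrable_const)
    (hquad_int.const_mul _) fun s _ => hpt s
  rw [intervalIntegral.integral_sub (hlin_int.const_mul _) intervalIntegrable_const,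
    intervalIntegral.integral_const_mul, hlin, intervalIntegral.integral_const,
    intervalIntegral.integral_const_mul, smul_eq_mul] at h
  nlinarith

open intervalIntegral in
theorem Matrix.PosSemidef.sumElim_intervalIntegral_dotProduct_fromBlocks_mulVec_le
    {T Z : Matrix m m ℝ} (hW : (fromBlocks T Z Zᵀ T).PosSemidef) {g : ℝ → m → ℝ} {a b c : ℝ}
    (hac : a ≤ c) (hcb : c ≤ b) (hg : ContinuousOn g (Icc a b)) :
    Sum.elim (∫ s in c..b, g s) (∫ s in a..c, g s) ⬝ᵥ
        (fromBlocks T Z Zᵀ T *ᵥ Sum.elim (∫ s in c..b, g s) (∫ s in a..c, g s)) ≤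
      (b - a) * ∫ s in a..b, g s ⬝ᵥ (T *ᵥ g s) := by
  have hT : T.PosSemidef := hW.submatrix Sum.inl
  have hg₁ : ContinuousOn g (Icc a c) := hg.mono (Icc_subset_Icc le_rfl hcb)
  have hg₂ : ContinuousOn g (Icc c b) := hg.mono (Icc_subset_Icc hac le_rfl)
  have hquad : Continuous fun x : m → ℝ => x ⬝ᵥ (T *ᵥ x) :=
    continuous_id.dotProduct (continuous_const.matrix_mulVec continuous_id)
  have hJ₁ := hT.intervalIntegral_dotProduct_mulVec_le hac hg₁
  have hJ₂ := hT.intervalIntegral_dotProduct_mulVec_le hcb hg₂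
  rw [← integral_add_adjacent_intervals (f := fun s => g s ⬝ᵥ (T *ᵥ g s))
    ((hquad.comp_continuousOn hg₁).intervalIntegrable_of_Icc hac)
    ((hquad.comp_continuousOn hg₂).intervalIntegrable_of_Icc hcb)]
  rcases hac.eq_or_lt with rfl | hac'
  · simpa [sumElim_dotProduct_fromBlocks_mulVec_sumElim] using hJ₂
  rcases hcb.eq_or_lt with rfl | hcb'
  · simpa [sumElim_dotProduct_fromBlocks_mulVec_sumElim] using hJ₁
  calc _ ≤ (b - c + (c - a)) * ((∫ s in c..b, g s) ⬝ᵥ (T *ᵥ ∫ s in c..b, g s) / (b - c) +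
          (∫ s in a..c, g s) ⬝ᵥ (T *ᵥ ∫ s in a..c, g s) / (c - a)) :=
        hW.sumElim_dotProduct_fromBlocks_mulVec_le _ _ (sub_pos.2 hcb') (sub_pos.2 hac')
    _ ≤ (b - a) * ((∫ s in a..c, g s ⬝ᵥ (T *ᵥ g s)) + ∫ s in c..b, g s ⬝ᵥ (T *ᵥ g s)) := by
        rw [add_comm (∫ s in a..c, _), sub_add_sub_cancel]
        gcongr
        · linarith
        · rwa [div_le_iff₀' (sub_pos.2 hcb')]
        · rwa [div_le_iff₀' (sub_pos.2 hac')]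

end QuadraticForm

theorem reciprocally_convex_bound_general {n : ℕ} (T Z : Matrix (Fin n) (Fin n) ℝ)
    (hW : (Matrix.fromBlocks T Z Zᵀ T).PosSemidef)
    (h h' τ t : ℝ) (hτ : τ ∈ Set.Icc h h')
    (ξ ξ' : ℝ → Fin n → ℝ)
    (hderiv : ∀ s ∈ Set.Icc (t - h') (t - h),
      HasDerivWithinAt ξ (ξ' s) (Set.Icc (t - h') (t - h)) s)
    (hcont : ContinuousOn ξ' (Set.Icc (t - h') (t - h))) :
    (Sum.elim (ξ (t - h) - ξ (t - τ)) (ξ (t - τ) - ξ (t - h'))) ⬝ᵥ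
        ((Matrix.fromBlocks T Z Zᵀ T) *ᵥ
          Sum.elim (ξ (t - h) - ξ (t - τ)) (ξ (t - τ) - ξ (t - h'))) ≤
      (h' - h) * ∫ s in (t - h')..(t - h), (ξ' s) ⬝ᵥ (T *ᵥ ξ' s) := by
  have hlow : t - h' ≤ t - τ := by linarith [hτ.2]
  have hup : t - τ ≤ t - h := by linarith [hτ.1]
  rw [← intervalIntegral.integral_eq_sub_of_hasDerivWithinAt_Icc hderiv hcont hup hlow le_rfl,
    ← intervalIntegral.integral_eq_sub_of_hasDerivWithinAt_Icc hderiv hcont hlow le_rfl hup,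
    show h' - h = t - h - (t - h') by ring]
  exact hW.sumElim_intervalIntegral_dotProduct_fromBlocks_mulVec_le hlow hup hcont

/-- **Reciprocally convex combination bound** (eq. (12) of the paper).
If the block matrix `W = [[T, Z], [Zᵀ, T]]` is positive semidefinite, `h < h'`,
`τ ∈ [h, h']` and `ξ` is `C¹` on `[t-h', t-h]`, then
`δ ∫_{t-h'}^{t-h} ξ'(s)ᵀ T ξ'(s) ds ≥ [a; b]ᵀ W [a; b]` with `δ = h' - h`,
`a = ξ(t-h) - ξ(t-τ)` and `b = ξ(t-τ) - ξ(t-h')`. -/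
theorem reciprocally_convex_bound {n : ℕ} (T Z : Matrix (Fin n) (Fin n) ℝ)
    (hT : T.IsSymm)
    (hW : (Matrix.fromBlocks T Z Zᵀ T).PosSemidef)
    (h h' τ t : ℝ) (hhh : h < h') (hτ : τ ∈ Set.Icc h h')
    (ξ ξ' : ℝ → Fin n → ℝ)
    (hderiv : ∀ s ∈ Set.Icc (t - h') (t - h),
      HasDerivWithinAt ξ (ξ' s) (Set.Icc (t - h') (t - h)) s)
    (hcont : ContinuousOn ξ' (Set.Icc (t - h') (t - h))) :
    (Sum.elim (ξ (t - h) - ξ (t - τ)) (ξ (t - τ) - ξ (t - h'))) ⬝ᵥ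
        ((Matrix.fromBlocks T Z Zᵀ T) *ᵥ
          Sum.elim (ξ (t - h) - ξ (t - τ)) (ξ (t - τ) - ξ (t - h'))) ≤
      (h' - h) * ∫ s in (t - h')..(t - h), (ξ' s) ⬝ᵥ (T *ᵥ ξ' s) :=
  reciprocally_convex_bound_general T Z hW h h' τ t hτ ξ ξ' hderiv hcont
end

section
/- Let T, Z ∈ ℝ^{n×n} with T symmetric, and suppose the 2n×2n block matrix [[T, Z],[Zᵀ, T]] is positive semidefinite. Then for every λ ∈ (0,1) and all a, b ∈ ℝⁿ: (1/λ) aᵀTa + (1/(1−λ)) bᵀTb ≥ aᵀTa + aᵀZb + bᵀZᵀa + bᵀTb. -/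
open Matrix

theorem Matrix.sumElim_dotProduct_fromBlocks_mulVec {m n α : Type*} [Fintype m] [Fintype n]
    [NonUnitalNonAssocSemiring α] (A : Matrix m m α) (B : Matrix m n α) (C : Matrix n m α)
    (D : Matrix n n α) (x : m → α) (y : n → α) :
    Sum.elim x y ⬝ᵥ (fromBlocks A B C D *ᵥ Sum.elim x y) =
      x ⬝ᵥ (A *ᵥ x) + x ⬝ᵥ (B *ᵥ y) + y ⬝ᵥ (C *ᵥ x) + y ⬝ᵥ (D *ᵥ y) := by
  rw [fromBlocks_mulVec, sumElim_dotProduct_sumElim, Sum.elim_comp_inl, Sum.elim_comp_inr,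
    dotProduct_add, dotProduct_add]
  simp only [add_assoc]

theorem Matrix.PosSemidef.dotProduct_offDiag_le {m n : Type*} [Fintype m] [Fintype n]
    {A : Matrix m m ℝ} {B : Matrix m n ℝ} {C : Matrix n m ℝ} {D : Matrix n n ℝ}
    (h : (fromBlocks A B C D).PosSemidef) (x : m → ℝ) (y : n → ℝ) :
    x ⬝ᵥ (B *ᵥ y) + y ⬝ᵥ (C *ᵥ x) ≤ x ⬝ᵥ (A *ᵥ x) + y ⬝ᵥ (D *ᵥ y) := by
  have hquad := h.dotProduct_mulVec_nonneg (Sum.elim x (-y))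
  rw [star_trivial, sumElim_dotProduct_fromBlocks_mulVec] at hquad
  simp only [mulVec_neg, dotProduct_neg, neg_dotProduct, neg_neg] at hquad
  linarith

theorem reciprocal_convexity_general {n : ℕ} (T Z : Matrix (Fin n) (Fin n) ℝ)
    (hW : (Matrix.fromBlocks T Z Zᵀ T).PosSemidef)
    (l : ℝ) (hl : l ∈ Set.Ioo (0 : ℝ) 1) (a b : Fin n → ℝ) :
    a ⬝ᵥ (T *ᵥ a) + a ⬝ᵥ (Z *ᵥ b) + b ⬝ᵥ (Zᵀ *ᵥ a) + b ⬝ᵥ (T *ᵥ b) ≤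
      (1 / l) * (a ⬝ᵥ (T *ᵥ a)) + (1 / (1 - l)) * (b ⬝ᵥ (T *ᵥ b)) := by
  obtain ⟨hl₀, hl₁⟩ := hl
  have hm : 0 < 1 - l := sub_pos.mpr hl₁
  -- the claim multiplied by `l (1 - l)` is the block form tested on `((1 - l) • a, l • b)`
  have key := hW.dotProduct_offDiag_le ((1 - l) • a) (l • b)
  simp only [mulVec_smul, dotProduct_smul, smul_dotProduct, smul_eq_mul] at key
  rw [one_div_mul_eq_div, one_div_mul_eq_div, div_add_div _ _ hl₀.ne' hm.ne',
    le_div_iff₀ (mul_pos hl₀ hm)]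
  linear_combination key

/-- **Reciprocal convexity lemma** underlying bound (12) of the paper.
If the block matrix `[[T, Z], [Zᵀ, T]]` is positive semidefinite, then for every
`λ ∈ (0,1)` and all vectors `a, b`:
`(1/λ) aᵀTa + (1/(1-λ)) bᵀTb ≥ aᵀTa + aᵀZb + bᵀZᵀa + bᵀTb`. -/
theorem reciprocal_convexity {n : ℕ} (T Z : Matrix (Fin n) (Fin n) ℝ)
    (hT : T.IsSymm)
    (hW : (Matrix.fromBlocks T Z Zᵀ T).PosSemidef)
    (l : ℝ) (hl : l ∈ Set.Ioo (0 : ℝ) 1) (a b : Fin n → ℝ) :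
    a ⬝ᵥ (T *ᵥ a) + a ⬝ᵥ (Z *ᵥ b) + b ⬝ᵥ (Zᵀ *ᵥ a) + b ⬝ᵥ (T *ᵥ b) ≤
      (1 / l) * (a ⬝ᵥ (T *ᵥ a)) + (1 / (1 - l)) * (b ⬝ᵥ (T *ᵥ b)) :=
  reciprocal_convexity_general T Z hW l hl a b
end

section
/- Fix i ∈ {1,…,M}. Let π_{i1}, …, π_{iM} ∈ ℝ with π_{ij} ≥ 0 for all j ≠ i and π_{ii} ≤ 0; let Q₁, …, Q_M be symmetric positive semidefinite n×n matrices and 𝒬 a symmetric matrix with Σ_{j=1}^M π_{ij} Q_j ⪯ 𝒬; let 0 ≤ h₁ ≤ h_j ≤ h_M for all j; let η ≥ −π_{ii} and let G be a symmetric matrix with (−π_{ii}) Q_i ⪯ G (in the paper, G = η Q_κ with κ = argmax_j |π_{jj}|). Then for every continuous ξ : ℝ → ℝⁿ and every t: Σ_{j=1}^M π_{ij} ∫_{t−h_j}^{t} ξ(s)ᵀ Q_j ξ(s) ds ≤ ∫_{t−h_M}^{t} ξ(s)ᵀ 𝒬 ξ(s) ds + ∫_{t−h_M}^{t−h₁}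 ξ(s)ᵀ G ξ(s) ds. -/
/-!
Split off the index `i`. For `j ≠ i` the rate `π j` is nonnegative and the integrand is
nonnegative, so each window `[t - h_j, t]` may be enlarged to `[t - h_M, t]`. For `j = i` the
rate is nonpositive, and enlarging the window costs `-π_i ∫_{t-h_M}^{t-h_i} ξᵀ Q_i ξ`, which is at
most `-π_i ∫_{t-h_M}^{t-h_1} ξᵀ Q_i ξ`. After the enlargement all windows agree, so the weighted
sum becomes a single integral of `ξᵀ (Σ_j π_j Q_j) ξ`, and the two Loewner bounds finish it.
-/

open Matrix

theorem Finset.sum_le_sum_add_of_le_add {ι α : Type*} [AddCommMonoid α] [PartialOrder α]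
    [IsOrderedAddMonoid α] [DecidableEq ι] {s : Finset ι} {i : ι} (hi : i ∈ s)
    {a b : ι → α} {r : α} (hai : a i ≤ b i + r) (hle : ∀ j ∈ s, j ≠ i → a j ≤ b j) :
    ∑ j ∈ s, a j ≤ (∑ j ∈ s, b j) + r := by
  rw [← Finset.add_sum_erase s a hi, ← Finset.add_sum_erase s b hi, add_right_comm]
  exact add_le_add hai <| Finset.sum_le_sum fun j hj ↦
    hle j (Finset.mem_of_mem_erase hj) (Finset.ne_of_mem_erase hj)

section IntervalIntegral

open intervalIntegral

variable {f : ℝ → ℝ} {a a' a'' b : ℝ}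

theorem intervalIntegral.integral_le_integral_of_le_left (hf : Continuous f) (hf0 : 0 ≤ f)
    (ha : a ≤ a') : ∫ x in a'..b, f x ≤ ∫ x in a..b, f x := by
  rw [← integral_add_adjacent_intervals (hf.intervalIntegrable a a') (hf.intervalIntegrable a' b)]
  exact le_add_of_nonneg_left (integral_nonneg ha fun x _ ↦ hf0 x)

theorem intervalIntegral.mul_integral_le_of_nonpos {c : ℝ} (hc : c ≤ 0) (hf : Continuous f)
    (hf0 : 0 ≤ f) (ha : a ≤ a') (ha' : a' ≤ a'') :
    c * ∫ x in a'..b, f x ≤ c * (∫ x in a..b, f x) + -c * ∫ x in a..a'', f x := by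
  have hsplit := integral_add_adjacent_intervals (μ := MeasureTheory.volume)
    (hf.intervalIntegrable a a') (hf.intervalIntegrable a' b)
  have hmono : ∫ x in a..a', f x ≤ ∫ x in a..a'', f x :=
    integral_mono_interval le_rfl ha ha' (.of_forall hf0) (hf.intervalIntegrable a a'')
  linear_combination c * hsplit + mul_le_mul_of_nonneg_left hmono (neg_nonneg.mpr hc)

end IntervalIntegral

section QuadraticForm

variable {m ι : Type*} [Fintype m]

theorem Matrix.PosSemidef.dotProduct_mulVec_le {A B : Matrix m m ℝ} (h : (B - A).PosSemidef)
    (x : m → ℝ) : x ⬝ᵥ (A *ᵥ x) ≤ x ⬝ᵥ (B *ᵥ x) := by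
  have := h.dotProduct_mulVec_nonneg x
  rw [star_trivial, sub_mulVec, dotProduct_sub] at this
  linarith

theorem Matrix.dotProduct_sum_smul_mulVec (s : Finset ι) (c : ι → ℝ) (A : ι → Matrix m m ℝ)
    (x : m → ℝ) :
    x ⬝ᵥ ((∑ j ∈ s, c j • A j) *ᵥ x) = ∑ j ∈ s, c j * x ⬝ᵥ (A j *ᵥ x) := by
  simp only [sum_mulVec, dotProduct_sum, smul_mulVec, dotProduct_smul, smul_eq_mul]

variable {ξ : ℝ → m → ℝ} {a b : ℝ}

theorem intervalIntegral.integral_dotProduct_mulVec_mono {A B : Matrix m m ℝ}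
    (h : (B - A).PosSemidef) (hξ : Continuous ξ) (hab : a ≤ b) :
    ∫ s in a..b, ξ s ⬝ᵥ (A *ᵥ ξ s) ≤ ∫ s in a..b, ξ s ⬝ᵥ (B *ᵥ ξ s) :=
  integral_mono_on hab ((by fun_prop : Continuous _).intervalIntegrable a b)
    ((by fun_prop : Continuous _).intervalIntegrable a b) fun s _ ↦ h.dotProduct_mulVec_le (ξ s)

theorem intervalIntegral.integral_dotProduct_sum_smul_mulVec (hξ : Continuous ξ) (s : Finset ι)
    (c : ι → ℝ) (A : ι → Matrix m m ℝ) :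
    ∫ u in a..b, ξ u ⬝ᵥ ((∑ j ∈ s, c j • A j) *ᵥ ξ u) =
      ∑ j ∈ s, c j * ∫ u in a..b, ξ u ⬝ᵥ (A j *ᵥ ξ u) := by
  simp only [dotProduct_sum_smul_mulVec, ← integral_const_mul]
  exact integral_finsetSum fun j _ ↦ (by fun_prop : Continuous _).intervalIntegrable a b

end QuadraticForm

theorem transition_rate_integral_bound_general {n M : ℕ} (i : Fin M) (π : Fin M → ℝ)
    (hπ : ∀ j, j ≠ i → 0 ≤ π j) (hπi : π i ≤ 0)
    (Q : Fin M → Matrix (Fin n) (Fin n) ℝ) (hQ : ∀ j, (Q j).PosSemidef)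
    (calQ : Matrix (Fin n) (Fin n) ℝ)
    (hQle : (calQ - ∑ j, π j • Q j).PosSemidef)
    (hdel : Fin M → ℝ) (hlo hhi : ℝ) (hlo0 : 0 ≤ hlo)
    (hbd : ∀ j, hlo ≤ hdel j ∧ hdel j ≤ hhi)
    (G : Matrix (Fin n) (Fin n) ℝ)
    (hGle : (G - (-(π i)) • Q i).PosSemidef)
    (ξ : ℝ → Fin n → ℝ) (hξ : Continuous ξ) (t : ℝ) :
    ∑ j, π j * ∫ s in (t - hdel j)..t, (ξ s) ⬝ᵥ (Q j *ᵥ ξ s) ≤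
      (∫ s in (t - hhi)..t, (ξ s) ⬝ᵥ (calQ *ᵥ ξ s)) +
        ∫ s in (t - hhi)..(t - hlo), (ξ s) ⬝ᵥ (G *ᵥ ξ s) := by
  have hcont (j : Fin M) : Continuous fun s ↦ ξ s ⬝ᵥ (Q j *ᵥ ξ s) := by fun_prop
  have hnonneg (j : Fin M) : 0 ≤ fun s ↦ ξ s ⬝ᵥ (Q j *ᵥ ξ s) := fun s ↦ by
    simpa using (hQ j).dotProduct_mulVec_nonneg (ξ s)
  have hwin (j : Fin M) : t - hhi ≤ t - hdel j := by linarith [(hbd j).2]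
  have hwin_lo : t - hdel i ≤ t - hlo := by linarith [(hbd i).1]
  have hhi_le : t - hhi ≤ t := by linarith [hwin i]
  calc ∑ j, π j * ∫ s in (t - hdel j)..t, ξ s ⬝ᵥ (Q j *ᵥ ξ s)
      ≤ (∑ j, π j * ∫ s in (t - hhi)..t, ξ s ⬝ᵥ (Q j *ᵥ ξ s)) +
          -π i * ∫ s in (t - hhi)..(t - hlo), ξ s ⬝ᵥ (Q i *ᵥ ξ s) := by
        refine Finset.sum_le_sum_add_of_le_add (Finset.mem_univ i) ?_ fun j _ hj ↦ ?_
        · exact intervalIntegral.mul_integral_le_of_nonpos hπi (hcont i) (hnonneg i) (hwin i)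
            hwin_lo
        · exact mul_le_mul_of_nonneg_left
            (intervalIntegral.integral_le_integral_of_le_left (hcont j) (hnonneg j) (hwin j))
            (hπ j hj)
    _ = (∫ s in (t - hhi)..t, ξ s ⬝ᵥ ((∑ j, π j • Q j) *ᵥ ξ s)) +
          ∫ s in (t - hhi)..(t - hlo), ξ s ⬝ᵥ ((-π i • Q i) *ᵥ ξ s) := by
        rw [intervalIntegral.integral_dotProduct_sum_smul_mulVec hξ]
        simp only [smul_mulVec, dotProduct_smul, smul_eq_mul, intervalIntegral.integral_const_mul]
    _ ≤ _ := add_le_add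
        (intervalIntegral.integral_dotProduct_mulVec_mono hQle hξ hhi_le)
        (intervalIntegral.integral_dotProduct_mulVec_mono hGle hξ ((hwin i).trans hwin_lo))

/-- **Upper bound (30)** in the infinitesimal-generator computation of the
stochastic stability analysis: bound on the transition-rate-weighted sum of
integrals `Σ_j π_{ij} ∫_{t−h_j}^{t} ξᵀ Q_j ξ`. -/
theorem transition_rate_integral_bound {n M : ℕ} (i : Fin M) (π : Fin M → ℝ)
    (hπ : ∀ j, j ≠ i → 0 ≤ π j) (hπi : π i ≤ 0)
    (Q : Fin M → Matrix (Fin n) (Fin n) ℝ) (hQ : ∀ j, (Q j).PosSemidef)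
    (calQ : Matrix (Fin n) (Fin n) ℝ) (hcalQ : calQ.IsSymm)
    (hQle : (calQ - ∑ j, π j • Q j).PosSemidef)
    (hdel : Fin M → ℝ) (hlo hhi : ℝ) (hlo0 : 0 ≤ hlo)
    (hbd : ∀ j, hlo ≤ hdel j ∧ hdel j ≤ hhi)
    (η : ℝ) (hη : -π i ≤ η)
    (G : Matrix (Fin n) (Fin n) ℝ) (hG : G.IsSymm)
    (hGle : (G - (-(π i)) • Q i).PosSemidef)
    (ξ : ℝ → Fin n → ℝ) (hξ : Continuous ξ) (t : ℝ) :
    ∑ j, π j * ∫ s in (t - hdel j)..t, (ξ s) ⬝ᵥ (Q j *ᵥ ξ s) ≤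
      (∫ s in (t - hhi)..t, (ξ s) ⬝ᵥ (calQ *ᵥ ξ s)) +
        ∫ s in (t - hhi)..(t - hlo), (ξ s) ⬝ᵥ (G *ᵥ ξ s) :=
  transition_rate_integral_bound_general i π hπ hπi Q hQ calQ hQle hdel hlo hhi hlo0 hbd G hGle ξ hξ
    t
end

section
/- Fix i ∈ {1,…,M}. Let π_{i1}, …, π_{iM} ∈ ℝ with π_{ij} ≥ 0 for all j ≠ i and π_{ii} = −Σ_{j≠i} π_{ij}; let S be a symmetric positive semidefinite n×n matrix; let 0 < h₁ ≤ h_j ≤ h_M for all j; and let η ≥ −π_{ii}. Then for every C¹ function ξ : ℝ → ℝⁿ and every t: Σ_{j=1}^M π_{ij} h_j ∫_{−h_j}^{0} ∫_{t+s}^{t} ξ'(θ)ᵀ S ξ'(θ) dθ ds ≤ η h_M ∫_{−h_M}^{−h₁} ∫_{t+s}^{t} ξ'(θ)ᵀ S ξ'(θ) dθ ds + η (h_M − h₁) ∫_{−h₁}^{0} ∫_{t+s}^{t} ξ'(θ)ᵀ S ξ'(θ) dθ ds. -/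
open Matrix Set

/-!
With `g θ = ξ'(θ)ᵀ S ξ'(θ) ≥ 0`, the double integral `D(u) = ∫_{-u}^0 ∫_{t+s}^t g` is nonnegative
and nondecreasing for `u ≥ 0`, hence so is `Φ(u) = u D(u)`, and the left-hand side is
`Σ_j π_j Φ(h_j)`. Since the off-diagonal rates are nonnegative and the row sums to zero,
`Σ_j π_j Φ(h_j) ≤ -π_i (Φ(h_M) - Φ(h_1)) ≤ η (Φ(h_M) - Φ(h_1))`, and the right-hand side is
exactly `η (Φ(h_M) - Φ(h_1))` after splitting `∫_{-h_M}^0 = ∫_{-h_M}^{-h_1} + ∫_{-h_1}^0`.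
-/

open Finset in
theorem sum_mul_le_of_generator_row {ι : Type*} [Fintype ι] [DecidableEq ι] {i : ι}
    {π a : ι → ℝ} {lo hi η : ℝ} (hπ : ∀ j, j ≠ i → 0 ≤ π j)
    (hπi : π i = -∑ j ∈ univ.erase i, π j) (hη : -π i ≤ η) (ha : ∀ j, a j ∈ Icc lo hi) :
    ∑ j, π j * a j ≤ η * (hi - lo) := by
  have hsum : ∑ j ∈ univ.erase i, π j = -π i := by rw [hπi, neg_neg]
  have hπi_nonpos : 0 ≤ -π i := hsum ▸ sum_nonneg fun j hj => hπ j (ne_of_mem_erase hj)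
  calc ∑ j, π j * a j = π i * a i + ∑ j ∈ univ.erase i, π j * a j :=
        (add_sum_erase _ _ (mem_univ i)).symm
    _ ≤ π i * a i + ∑ j ∈ univ.erase i, π j * hi := by
        gcongr with j hj
        · exact hπ j (ne_of_mem_erase hj)
        · exact (ha j).2
    _ = -π i * (hi - a i) := by rw [← sum_mul, hsum]; ring
    _ ≤ η * (hi - lo) :=
        mul_le_mul hη (by linarith [(ha i).1]) (by linarith [(ha i).2]) (hπi_nonpos.trans hη)

noncomputable def delayDoubleIntegral (g : ℝ → ℝ) (t u : ℝ) : ℝ :=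
  ∫ s in (-u)..0, ∫ θ in (t + s)..t, g θ

section DelayDoubleIntegral

open intervalIntegral MeasureTheory

variable {g : ℝ → ℝ} {t : ℝ}

theorem continuous_integral_add_left_self (hg : ∀ a b, IntervalIntegrable g volume a b) :
    Continuous fun s => ∫ θ in (t + s)..t, g θ := by
  simp only [integral_symm t]
  exact ((continuous_primitive hg t).comp (continuous_const_add t)).neg

theorem integral_add_left_self_nonneg (hg0 : 0 ≤ g) {s : ℝ} (hs : s ≤ 0) :
    0 ≤ ∫ θ in (t + s)..t, g θ :=
  integral_nonneg (by linarith) fun θ _ => hg0 θ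

theorem delayDoubleIntegral_nonneg (hg0 : 0 ≤ g) {u : ℝ} (hu : 0 ≤ u) :
    0 ≤ delayDoubleIntegral g t u :=
  integral_nonneg (by linarith) fun _ hs => integral_add_left_self_nonneg hg0 hs.2

theorem delayDoubleIntegral_sub (hg : ∀ a b, IntervalIntegrable g volume a b) (u v : ℝ) :
    delayDoubleIntegral g t v - delayDoubleIntegral g t u =
      ∫ s in (-v)..(-u), ∫ θ in (t + s)..t, g θ :=
  sub_eq_of_eq_add (integral_add_adjacent_intervals
    ((continuous_integral_add_left_self hg).intervalIntegrable _ _)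
    ((continuous_integral_add_left_self hg).intervalIntegrable _ _)).symm

theorem monotoneOn_delayDoubleIntegral (hg : ∀ a b, IntervalIntegrable g volume a b)
    (hg0 : 0 ≤ g) : MonotoneOn (delayDoubleIntegral g t) (Ici 0) := by
  intro u hu v _ huv
  rw [← sub_nonneg, delayDoubleIntegral_sub hg]
  exact integral_nonneg (by linarith) fun s hs =>
    integral_add_left_self_nonneg hg0 (hs.2.trans (neg_nonpos.2 hu))

theorem monotoneOn_mul_delayDoubleIntegral (hg : ∀ a b, IntervalIntegrable g volume a b)
    (hg0 : 0 ≤ g) : MonotoneOn (fun u => u * delayDoubleIntegral g t u) (Ici 0) :=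
  monotoneOn_id.mul (monotoneOn_delayDoubleIntegral hg hg0) (fun _ hu => hu)
    fun _ hu => delayDoubleIntegral_nonneg hg0 hu

end DelayDoubleIntegral

theorem transition_rate_double_integral_bound_general {n M : ℕ} (i : Fin M) (π : Fin M → ℝ)
    (hπ : ∀ j, j ≠ i → 0 ≤ π j)
    (hπi : π i = -∑ j ∈ Finset.univ.erase i, π j)
    (S : Matrix (Fin n) (Fin n) ℝ) (hS : S.PosSemidef)
    (hdel : Fin M → ℝ) (hlo hhi : ℝ) (hlo0 : 0 < hlo)
    (hbd : ∀ j, hlo ≤ hdel j ∧ hdel j ≤ hhi)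
    (η : ℝ) (hη : -π i ≤ η)
    (ξ' : ℝ → Fin n → ℝ) (hc : Continuous ξ') (t : ℝ) :
    ∑ j, π j * hdel j *
        ∫ s in (-(hdel j))..(0 : ℝ), ∫ θ in (t + s)..t, (ξ' θ) ⬝ᵥ (S *ᵥ ξ' θ) ≤
      η * hhi * (∫ s in (-hhi)..(-hlo), ∫ θ in (t + s)..t, (ξ' θ) ⬝ᵥ (S *ᵥ ξ' θ)) +
        η * (hhi - hlo) *
          ∫ s in (-hlo)..(0 : ℝ), ∫ θ in (t + s)..t, (ξ' θ) ⬝ᵥ (S *ᵥ ξ' θ) := by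
  set g : ℝ → ℝ := fun θ => (ξ' θ) ⬝ᵥ (S *ᵥ ξ' θ)
  have hg : ∀ a b, IntervalIntegrable g MeasureTheory.volume a b :=
    (hc.dotProduct (continuous_const.matrix_mulVec hc)).intervalIntegrable
  have hg0 : 0 ≤ g := fun θ => by simpa using hS.dotProduct_mulVec_nonneg (ξ' θ)
  set D := delayDoubleIntegral g t
  have hΦ := monotoneOn_mul_delayDoubleIntegral (t := t) hg hg0
  have hlo_mem : hlo ∈ Ici 0 := hlo0.le
  have hdel_mem : ∀ j, hdel j ∈ Ici 0 := fun j => hlo_mem.trans (hbd j).1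
  have hhi_mem : hhi ∈ Ici 0 := hlo_mem.trans ((hbd i).1.trans (hbd i).2)
  calc ∑ j, π j * hdel j * D (hdel j) = ∑ j, π j * (hdel j * D (hdel j)) := by
        simp only [mul_assoc]
    _ ≤ η * (hhi * D hhi - hlo * D hlo) :=
        sum_mul_le_of_generator_row hπ hπi hη fun j =>
          ⟨hΦ hlo_mem (hdel_mem j) (hbd j).1, hΦ (hdel_mem j) hhi_mem (hbd j).2⟩
    _ = η * hhi * (D hhi - D hlo) + η * (hhi - hlo) * D hlo := by ring
    _ = _ := by rw [delayDoubleIntegral_sub hg]; rfl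

/-- **Upper bound (31)** in the infinitesimal-generator computation of the
stochastic stability analysis: bound on the transition-rate-weighted sum of
double integrals `Σ_j π_{ij} h_j ∫_{−h_j}^{0} ∫_{t+s}^{t} ξ'ᵀ S ξ'`. -/
theorem transition_rate_double_integral_bound {n M : ℕ} (i : Fin M) (π : Fin M → ℝ)
    (hπ : ∀ j, j ≠ i → 0 ≤ π j)
    (hπi : π i = -∑ j ∈ Finset.univ.erase i, π j)
    (S : Matrix (Fin n) (Fin n) ℝ) (hS : S.PosSemidef)
    (hdel : Fin M → ℝ) (hlo hhi : ℝ) (hlo0 : 0 < hlo)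
    (hbd : ∀ j, hlo ≤ hdel j ∧ hdel j ≤ hhi)
    (η : ℝ) (hη : -π i ≤ η)
    (ξ ξ' : ℝ → Fin n → ℝ) (hξ : ∀ s, HasDerivAt ξ (ξ' s) s)
    (hc : Continuous ξ') (t : ℝ) :
    ∑ j, π j * hdel j *
        ∫ s in (-(hdel j))..(0 : ℝ), ∫ θ in (t + s)..t, (ξ' θ) ⬝ᵥ (S *ᵥ ξ' θ) ≤
      η * hhi * (∫ s in (-hhi)..(-hlo), ∫ θ in (t + s)..t, (ξ' θ) ⬝ᵥ (S *ᵥ ξ' θ)) +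
        η * (hhi - hlo) *
          ∫ s in (-hlo)..(0 : ℝ), ∫ θ in (t + s)..t, (ξ' θ) ⬝ᵥ (S *ᵥ ξ' θ) :=
  transition_rate_double_integral_bound_general i π hπ hπi S hS hdel hlo hhi hlo0 hbd η hη ξ' hc t
end
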